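/- arXiv:2311.10838 — 4 statements merged into one kernel-verified Lean document; each statement's English description precedes it below -/
import Mathlib

section
/- Let x ∈ ℝ³ with planar part x_p = (x1,x2,0), and v ∈ ℝ³ with v_p = (v1,v2,0) ≠ 0. Suppose the forward linear trajectory x + t v first meets the cylinder {|y|_p = R} at a point X₀ with |x|_p < R. Then the cosine of the angle a between the outward normal X₀_p/R and the planar direction v̂_p satisfies cos a = √(1 − |x|_p²/R² + (x_p·v̂_p)²/R²) > 0. -/
/-- planar norm of a vector in ℝ³ -/
noncomputable def normp (y : ℝ × ℝ × ℝ) : ℝ := Real.sqrt (y.1 ^ 2 + y.2.1 ^ 2)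

/-- planar dot product of vectors in ℝ³ -/
def dotp (y w : ℝ × ℝ × ℝ) : ℝ := y.1 * w.1 + y.2.1 * w.2.1

/-!
Write `X₀ = x + t v`. Along a line the quantity `(X·v)² - |X|²|v|²` is constant, so
`(X₀·v)² = (x·v)² + |v|²(R² - |x|²)`, which is `R²|v|²` times the expression under the
root. It remains to see that `X₀·v > 0`: the planar norm grows from `|x|_p < R` to `R` on
`[0, t]`, so `t(2 x·v + t|v|²) > 0`, hence `2 x·v + t|v|² > 0` and
`X₀·v = (2 x·v + t|v|²)/2 + t|v|²/2 > 0`.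
-/

lemma normp_nonneg (y : ℝ × ℝ × ℝ) : 0 ≤ normp y := Real.sqrt_nonneg _

lemma normp_sq (y : ℝ × ℝ × ℝ) : normp y ^ 2 = y.1 ^ 2 + y.2.1 ^ 2 :=
  Real.sq_sqrt (by positivity)

lemma normp_add_smul_sq (x v : ℝ × ℝ × ℝ) (t : ℝ) :
    normp (x + t • v) ^ 2 = normp x ^ 2 + t * (2 * dotp x v + t * normp v ^ 2) := by
  simp only [normp_sq, dotp, Prod.fst_add, Prod.snd_add, Prod.smul_fst, Prod.smul_snd,
    smul_eq_mul]
  ring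

lemma dotp_add_smul_left (x v w : ℝ × ℝ × ℝ) (t : ℝ) :
    dotp (x + t • v) w = dotp x w + t * dotp v w := by
  simp only [dotp, Prod.fst_add, Prod.snd_add, Prod.smul_fst, Prod.smul_snd, smul_eq_mul]
  ring

lemma dotp_self (v : ℝ × ℝ × ℝ) : dotp v v = normp v ^ 2 := by
  rw [normp_sq, dotp]
  ring

lemma dotp_add_smul_sq_sub (x v : ℝ × ℝ × ℝ) (t : ℝ) :
    dotp (x + t • v) v ^ 2 - normp (x + t • v) ^ 2 * normp v ^ 2
      = dotp x v ^ 2 - normp x ^ 2 * normp v ^ 2 := by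
  rw [dotp_add_smul_left, normp_add_smul_sq, dotp_self]
  ring

lemma dotp_add_smul_pos_of_normp_eq {R : ℝ} {x v : ℝ × ℝ × ℝ} {t : ℝ}
    (hx : normp x < R) (ht : 0 ≤ t) (hhit : normp (x + t • v) = R) :
    0 < dotp (x + t • v) v := by
  have hgrowth : 0 < t * (2 * dotp x v + t * normp v ^ 2) := by
    have := normp_add_smul_sq x v t
    rw [hhit] at this
    nlinarith [normp_nonneg x]
  have hslope : 0 < 2 * dotp x v + t * normp v ^ 2 := pos_of_mul_pos_right hgrowth ht
  rw [dotp_add_smul_left, dotp_self]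
  linarith [mul_nonneg ht (sq_nonneg (normp v))]

theorem stmt_1_general (R : ℝ) (x v : ℝ × ℝ × ℝ)
    (hx : normp x < R) (hv : normp v ≠ 0) (t : ℝ) (ht : 0 ≤ t)
    (hhit : normp (x + t • v) = R) :
    dotp (x + t • v) v / (R * normp v)
      = Real.sqrt (1 - normp x ^ 2 / R ^ 2 + (dotp x v / normp v) ^ 2 / R ^ 2) ∧
    0 < Real.sqrt (1 - normp x ^ 2 / R ^ 2 + (dotp x v / normp v) ^ 2 / R ^ 2) := by
  have hR : 0 < R := (normp_nonneg x).trans_lt hx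
  have hcos : 0 < dotp (x + t • v) v / (R * normp v) :=
    div_pos (dotp_add_smul_pos_of_normp_eq hx ht hhit)
      (mul_pos hR ((normp_nonneg v).lt_of_ne' hv))
  have hinvariant := dotp_add_smul_sq_sub x v t
  rw [hhit] at hinvariant
  have harg : 1 - normp x ^ 2 / R ^ 2 + (dotp x v / normp v) ^ 2 / R ^ 2
      = (dotp (x + t • v) v / (R * normp v)) ^ 2 := by
    field_simp
    linear_combination -hinvariant
  rw [harg, Real.sqrt_sq hcos.le]
  exact ⟨rfl, hcos⟩

/-- if the forward linear trajectory `x + t v` first meets the cylinder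
`{|y|_p = R}` at `X₀ = x + t v` with `|x|_p < R`, then the cosine of the incidence angle
`cos a = (X₀_p/R)·v̂_p` equals `√(1 − |x|_p²/R² + (x_p·v̂_p)²/R²) > 0`. -/
theorem stmt_1 (R : ℝ) (hR : 0 < R) (x v : ℝ × ℝ × ℝ)
    (hx : normp x < R) (hv : normp v ≠ 0) (t : ℝ) (ht : 0 ≤ t)
    (hhit : normp (x + t • v) = R)
    (hfirst : ∀ τ : ℝ, 0 ≤ τ → τ < t → normp (x + τ • v) < R) :
    dotp (x + t • v) v / (R * normp v)
      = Real.sqrt (1 - normp x ^ 2 / R ^ 2 + (dotp x v / normp v) ^ 2 / R ^ 2) ∧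
    0 < Real.sqrt (1 - normp x ^ 2 / R ^ 2 + (dotp x v / normp v) ^ 2 / R ^ 2) :=
  stmt_1_general R x v hx hv t ht hhit
end

section
/- Consider specular reflection in the planar annulus r < |y| < R: given (x,v) with the trajectory bouncing between boundary circles, define recursively V_{k+1} = V_k − 2(n(X_{k+1})·V_k) n(X_{k+1}) and X_{k+2} = X_{k+1} − t_{b,k+1} V_{k+1}, where n is the outward unit normal and t_{b,k+1} is the backward exit time from (X_{k+1}, V_{k+1}). Then all inter-collision times are equal: t_{b,k+1} = t_* for all k, where t_* = t_b(x,v) + t_f(x,v). -/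
/-- planar Euclidean norm on ℝ² -/
noncomputable def nrm (y : ℝ × ℝ) : ℝ := Real.sqrt (y.1 ^ 2 + y.2 ^ 2)

/-- the annulus `{y : r < |y| < R}` -/
def OmegaAnn (r R : ℝ) : Set (ℝ × ℝ) := {y | r < nrm y ∧ nrm y < R}

/-- backward exit time `t_b(x,v) = sup{s ≥ 0 : x − τ v ∈ Ω for all τ ∈ (0,s)}` -/
noncomputable def tbTime (r R : ℝ) (x v : ℝ × ℝ) : ℝ :=
  sSup {s : ℝ | 0 ≤ s ∧ ∀ τ : ℝ, 0 < τ → τ < s → (x - τ • v) ∈ OmegaAnn r R}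

/-- forward exit time `t_f(x,v) = sup{s ≥ 0 : x + τ v ∈ Ω for all τ ∈ (0,s)}` -/
noncomputable def tfTime (r R : ℝ) (x v : ℝ × ℝ) : ℝ :=
  sSup {s : ℝ | 0 ≤ s ∧ ∀ τ : ℝ, 0 < τ → τ < s → (x + τ • v) ∈ OmegaAnn r R}

/-- outward unit normal of the annulus: `y/|y|` on the outer circle, `−y/|y|` on the inner -/
noncomputable def nvec (r R : ℝ) (y : ℝ × ℝ) : ℝ × ℝ :=
  if nrm y = R then (nrm y)⁻¹ • y else -((nrm y)⁻¹ • y)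

/-- dot product on ℝ² -/
def dot2 (y w : ℝ × ℝ) : ℝ := y.1 * w.1 + y.2 * w.2

namespace Stmt4

def sq2 (y : ℝ × ℝ) : ℝ := y.1 ^ 2 + y.2 ^ 2

lemma sq2_nonneg (y : ℝ × ℝ) : 0 ≤ sq2 y := by
  have := sq_nonneg y.1; have := sq_nonneg y.2; unfold sq2; linarith

lemma sq2_pos {v : ℝ × ℝ} (hv : v ≠ 0) : 0 < sq2 v := by
  have h : v.1 ≠ 0 ∨ v.2 ≠ 0 := by
    by_contra h; push_neg at h; exact hv (Prod.ext h.1 h.2)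
  unfold sq2
  rcases h with h | h
  · have h1 : 0 < v.1 * v.1 := mul_self_pos.mpr h
    nlinarith [sq_nonneg v.2]
  · have h1 : 0 < v.2 * v.2 := mul_self_pos.mpr h
    nlinarith [sq_nonneg v.1]

lemma nrm_def (y : ℝ × ℝ) : nrm y = Real.sqrt (sq2 y) := rfl

lemma nrm_eq_of_sq2 {ρ : ℝ} (hρ : 0 ≤ ρ) {y : ℝ × ℝ} (h : sq2 y = ρ ^ 2) : nrm y = ρ := by
  rw [nrm_def, h]; exact Real.sqrt_sq hρ

lemma sq2_eq_of_nrm {ρ : ℝ} {y : ℝ × ℝ} (h : nrm y = ρ) : sq2 y = ρ ^ 2 := by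
  rw [← h, nrm_def, Real.sq_sqrt (sq2_nonneg y)]

lemma nrm_ne_zero {ρ : ℝ} (hρ : 0 < ρ) {y : ℝ × ℝ} (h : sq2 y = ρ ^ 2) : nrm y ≠ 0 := by
  rw [nrm_eq_of_sq2 hρ.le h]; exact ne_of_gt hρ

lemma mem_omega_iff {r R : ℝ} (hr : 0 ≤ r) (hR : 0 < R) {y : ℝ × ℝ} :
    y ∈ OmegaAnn r R ↔ r ^ 2 < sq2 y ∧ sq2 y < R ^ 2 := by
  constructor
  · rintro ⟨h1, h2⟩
    exact ⟨(Real.lt_sqrt hr).mp h1, (Real.sqrt_lt' hR).mp h2⟩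
  · rintro ⟨h1, h2⟩
    exact ⟨(Real.lt_sqrt hr).mpr h1, (Real.sqrt_lt' hR).mpr h2⟩

lemma sq2_sub_smul (y w : ℝ × ℝ) (t : ℝ) :
    sq2 (y - t • w) = sq2 y - 2 * t * dot2 y w + t ^ 2 * sq2 w := by
  simp only [sq2, dot2, Prod.fst_sub, Prod.snd_sub, Prod.smul_fst, Prod.smul_snd,
    smul_eq_mul]
  ring

lemma dot2_sub_smul (y w : ℝ × ℝ) (t : ℝ) :
    dot2 (y - t • w) w = dot2 y w - t * sq2 w := by
  simp only [sq2, dot2, Prod.fst_sub, Prod.snd_sub, Prod.smul_fst, Prod.smul_snd,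
    smul_eq_mul]
  ring

lemma dot2_add_smul (y w : ℝ × ℝ) (t : ℝ) :
    dot2 (y + t • w) w = dot2 y w + t * sq2 w := by
  simp only [sq2, dot2, Prod.fst_add, Prod.snd_add, Prod.smul_fst, Prod.smul_snd,
    smul_eq_mul]
  ring

lemma dot2_neg_right (y w : ℝ × ℝ) : dot2 y (-w) = -dot2 y w := by
  simp [dot2]; ring

lemma sq2_neg (w : ℝ × ℝ) : sq2 (-w) = sq2 w := by
  simp [sq2]

lemma tf_eq_tb_neg (r R : ℝ) (y w : ℝ × ℝ) : tfTime r R y w = tbTime r R y (-w) := by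
  unfold tfTime tbTime
  congr 2
  ext s
  simp [smul_neg, sub_neg_eq_add]

lemma tb_eq {r R : ℝ} {y w : ℝ × ℝ} {t : ℝ} (ht : 0 < t)
    (hin : ∀ τ : ℝ, 0 < τ → τ < t → (y - τ • w) ∈ OmegaAnn r R)
    (hbd : nrm (y - t • w) = r ∨ nrm (y - t • w) = R) :
    tbTime r R y w = t := by
  apply IsGreatest.csSup_eq
  constructor
  · exact ⟨ht.le, hin⟩
  · intro s hs
    by_contra hst
    push_neg at hst
    have h2 := hs.2 t ht hst
    obtain ⟨h21, h22⟩ := h2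
    rcases hbd with h | h
    · rw [h] at h21; exact lt_irrefl r h21
    · rw [h] at h22; exact lt_irrefl R h22

noncomputable def rfl2 (y w : ℝ × ℝ) : ℝ × ℝ := w - ((2 * dot2 y w) / sq2 y) • y

lemma refl_aux {y w : ℝ × ℝ} {c : ℝ} (hc : c ^ 2 * sq2 y = 1) :
    w - (2 * dot2 (c • y) w) • (c • y) = rfl2 y w := by
  have hsq0 : sq2 y ≠ 0 := by
    intro h; rw [h, mul_zero] at hc; exact one_ne_zero hc.symm
  unfold rfl2
  apply Prod.ext <;>
  · simp only [dot2, sq2, Prod.fst_sub, Prod.snd_sub, Prod.smul_fst, Prod.smul_snd,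
      smul_eq_mul] at *
    field_simp
    first
      | (linear_combination (2 * (y.1 * w.1 + y.2 * w.2) * y.1) * hc; done)
      | (linear_combination (2 * (y.1 * w.1 + y.2 * w.2) * y.2) * hc; done)
      | (linear_combination (-(2 * (y.1 * w.1 + y.2 * w.2) * y.1)) * hc; done)
      | (linear_combination (-(2 * (y.1 * w.1 + y.2 * w.2) * y.2)) * hc; done)

lemma nvec_refl {r R : ℝ} {y w : ℝ × ℝ} (hy : nrm y ≠ 0) :
    w - (2 * dot2 (nvec r R y) w) • nvec r R y = rfl2 y w := by
  have hsq : nrm y ^ 2 = sq2 y := (sq2_eq_of_nrm rfl).symm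
  have hsq0 : sq2 y ≠ 0 := by rw [← hsq]; exact pow_ne_zero 2 hy
  unfold nvec
  split
  · apply refl_aux
    rw [inv_pow, hsq]
    exact inv_mul_cancel₀ hsq0
  · rw [show -((nrm y)⁻¹ • y) = (-(nrm y)⁻¹) • y by rw [neg_smul]]
    apply refl_aux
    rw [show (-(nrm y)⁻¹) ^ 2 = ((nrm y)⁻¹) ^ 2 by ring, inv_pow, hsq]
    exact inv_mul_cancel₀ hsq0

lemma dot2_rfl2 {y : ℝ × ℝ} (hy : sq2 y ≠ 0) (w : ℝ × ℝ) :
    dot2 y (rfl2 y w) = -dot2 y w := by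
  unfold rfl2
  simp only [dot2, sq2, Prod.fst_sub, Prod.snd_sub, Prod.smul_fst, Prod.smul_snd,
    smul_eq_mul] at *
  field_simp
  ring

lemma sq2_rfl2 {y : ℝ × ℝ} (hy : sq2 y ≠ 0) (w : ℝ × ℝ) :
    sq2 (rfl2 y w) = sq2 w := by
  unfold rfl2
  simp only [dot2, sq2, Prod.fst_sub, Prod.snd_sub, Prod.smul_fst, Prod.smul_snd,
    smul_eq_mul] at *
  field_simp
  ring

lemma dot2_nvec_zero {r R : ℝ} {y w : ℝ × ℝ} (h : dot2 y w = 0) :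
    dot2 (nvec r R y) w = 0 := by
  unfold nvec
  split <;>
  · simp only [dot2, Prod.smul_fst, Prod.smul_snd, Prod.fst_neg, Prod.snd_neg,
      smul_eq_mul] at *
    first
      | linear_combination (nrm y)⁻¹ * h
      | linear_combination -(nrm y)⁻¹ * h

/-- exit time backward from an interior point, exiting through the outer circle -/
lemma tb_out {r R : ℝ} (hr : 0 < r) (hrR : r < R) {y w : ℝ × ℝ}
    (ha : 0 < sq2 w) (hc1 : r ^ 2 < sq2 y) (hc2 : sq2 y < R ^ 2)
    (hcase : dot2 y w ≤ 0 ∨ sq2 w * r ^ 2 < sq2 w * sq2 y - dot2 y w ^ 2) :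
    tbTime r R y w
        = (dot2 y w + Real.sqrt (dot2 y w ^ 2 + sq2 w * (R ^ 2 - sq2 y))) / sq2 w ∧
      sq2 (y - tbTime r R y w • w) = R ^ 2 := by
  have hR : 0 < R := lt_trans hr hrR
  set a := sq2 w with haa
  set b := dot2 y w with hbb
  set c := sq2 y with hcc
  set B := Real.sqrt (b ^ 2 + a * (R ^ 2 - c)) with hB
  have hargnn : 0 ≤ b ^ 2 + a * (R ^ 2 - c) := by nlinarith [sq_nonneg b]
  have hB2 : B ^ 2 = b ^ 2 + a * (R ^ 2 - c) := Real.sq_sqrt hargnn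
  have hBnn : 0 ≤ B := Real.sqrt_nonneg _
  have hBb : b < B := by nlinarith
  have hBb' : -b < B := by nlinarith
  have ht : 0 < (b + B) / a := div_pos (by linarith) ha
  have hsq : sq2 (y - ((b + B) / a) • w) = R ^ 2 := by
    rw [sq2_sub_smul, ← hbb, ← haa, ← hcc]
    field_simp
    first
      | (linear_combination hB2; done)
      | (linear_combination a * hB2; done)
      | (linear_combination (-1 : ℝ) * hB2; done)
      | (linear_combination (-a) * hB2; done)
      | (linear_combination a ^ 2 * hB2; done)
      | (linear_combination (-(a ^ 2)) * hB2; done)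
  have hmain : tbTime r R y w = (b + B) / a := by
    apply tb_eq ht
    · intro τ h0 hτ
      have hτa : τ * a < b + B := (lt_div_iff₀ ha).mp hτ
      rw [mem_omega_iff hr.le hR, sq2_sub_smul, ← hbb, ← haa, ← hcc]
      constructor
      · rcases hcase with h | h
        · nlinarith [mul_pos h0 h0, mul_pos ha (mul_pos h0 h0)]
        · nlinarith [sq_nonneg (a * τ - b)]
      · have k1 : 0 < b + B - τ * a := by linarith
        have k2 : 0 < τ * a + (B - b) := by nlinarith [mul_pos h0 ha]
        nlinarith [mul_pos k1 k2]
    · exact Or.inr (nrm_eq_of_sq2 hR.le hsq)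
  exact ⟨hmain, by rw [hmain]; exact hsq⟩

/-- exit time backward from an interior point, exiting through the inner circle -/
lemma tb_in {r R : ℝ} (hr : 0 < r) (hrR : r < R) {y w : ℝ × ℝ}
    (ha : 0 < sq2 w) (hc1 : r ^ 2 < sq2 y) (hc2 : sq2 y < R ^ 2)
    (hb : 0 < dot2 y w) (hreg : sq2 w * sq2 y - dot2 y w ^ 2 ≤ sq2 w * r ^ 2) :
    tbTime r R y w
        = (dot2 y w - Real.sqrt (dot2 y w ^ 2 - sq2 w * (sq2 y - r ^ 2))) / sq2 w ∧
      sq2 (y - tbTime r R y w • w) = r ^ 2 := by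
  have hR : 0 < R := lt_trans hr hrR
  set a := sq2 w with haa
  set b := dot2 y w with hbb
  set c := sq2 y with hcc
  set G := Real.sqrt (b ^ 2 - a * (c - r ^ 2)) with hG
  have hargnn : 0 ≤ b ^ 2 - a * (c - r ^ 2) := by nlinarith
  have hG2 : G ^ 2 = b ^ 2 - a * (c - r ^ 2) := Real.sq_sqrt hargnn
  have hGnn : 0 ≤ G := Real.sqrt_nonneg _
  have hGb : G < b := by nlinarith
  have ht : 0 < (b - G) / a := div_pos (by linarith) ha
  have hsq : sq2 (y - ((b - G) / a) • w) = r ^ 2 := by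
    rw [sq2_sub_smul, ← hbb, ← haa, ← hcc]
    field_simp
    first
      | (linear_combination hG2; done)
      | (linear_combination a * hG2; done)
      | (linear_combination (-1 : ℝ) * hG2; done)
      | (linear_combination (-a) * hG2; done)
      | (linear_combination a ^ 2 * hG2; done)
      | (linear_combination (-(a ^ 2)) * hG2; done)
  have hmain : tbTime r R y w = (b - G) / a := by
    apply tb_eq ht
    · intro τ h0 hτ
      have hτa : τ * a < b - G := (lt_div_iff₀ ha).mp hτ
      rw [mem_omega_iff hr.le hR, sq2_sub_smul, ← hbb, ← haa, ← hcc]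
      constructor
      · have k1 : 0 < b - τ * a - G := by linarith
        have k2 : 0 < b - τ * a + G := by linarith
        nlinarith [mul_pos k1 k2]
      · have k : 0 < τ * (2 * b - τ * a) := mul_pos h0 (by linarith)
        nlinarith [k]
    · exact Or.inl (nrm_eq_of_sq2 hr.le hsq)
  exact ⟨hmain, by rw [hmain]; exact hsq⟩

/-- exit time backward from the outer circle, regime 1 (comes back to the outer circle) -/
lemma tb_bd_out1 {r R : ℝ} (hr : 0 < r) (hrR : r < R) {y w : ℝ × ℝ}
    (ha : 0 < sq2 w) (hcR : sq2 y = R ^ 2) (hb : 0 < dot2 y w)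
    (hreg : sq2 w * r ^ 2 < sq2 w * sq2 y - dot2 y w ^ 2) :
    tbTime r R y w = 2 * dot2 y w / sq2 w ∧
      sq2 (y - tbTime r R y w • w) = R ^ 2 := by
  have hR : 0 < R := lt_trans hr hrR
  set a := sq2 w with haa
  set b := dot2 y w with hbb
  have hreg' : a * r ^ 2 < a * R ^ 2 - b ^ 2 := by rw [hcR] at hreg; exact hreg
  have ht : 0 < 2 * b / a := div_pos (by linarith) ha
  have hsq : sq2 (y - (2 * b / a) • w) = R ^ 2 := by
    rw [sq2_sub_smul, ← hbb, ← haa, hcR]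
    field_simp
    ring
  have hmain : tbTime r R y w = 2 * b / a := by
    apply tb_eq ht
    · intro τ h0 hτ
      have hτa : τ * a < 2 * b := (lt_div_iff₀ ha).mp hτ
      rw [mem_omega_iff hr.le hR, sq2_sub_smul, ← hbb, ← haa, hcR]
      constructor
      · nlinarith [sq_nonneg (a * τ - b)]
      · have k : 0 < τ * (2 * b - τ * a) := mul_pos h0 (by linarith)
        nlinarith [k]
    · exact Or.inr (nrm_eq_of_sq2 hR.le hsq)
  exact ⟨hmain, by rw [hmain]; exact hsq⟩

/-- exit time backward from the outer circle, regime 2 (reaches the inner circle) -/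
lemma tb_bd_out2 {r R : ℝ} (hr : 0 < r) (hrR : r < R) {y w : ℝ × ℝ}
    (ha : 0 < sq2 w) (hcR : sq2 y = R ^ 2) (hb : 0 < dot2 y w)
    (hreg : sq2 w * sq2 y - dot2 y w ^ 2 ≤ sq2 w * r ^ 2) :
    tbTime r R y w
        = (dot2 y w - Real.sqrt (dot2 y w ^ 2 - sq2 w * (R ^ 2 - r ^ 2))) / sq2 w ∧
      sq2 (y - tbTime r R y w • w) = r ^ 2 := by
  have hR : 0 < R := lt_trans hr hrR
  set a := sq2 w with haa
  set b := dot2 y w with hbb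
  have hreg' : a * R ^ 2 - b ^ 2 ≤ a * r ^ 2 := by rw [hcR] at hreg; exact hreg
  set G := Real.sqrt (b ^ 2 - a * (R ^ 2 - r ^ 2)) with hG
  have hargnn : 0 ≤ b ^ 2 - a * (R ^ 2 - r ^ 2) := by nlinarith
  have hG2 : G ^ 2 = b ^ 2 - a * (R ^ 2 - r ^ 2) := Real.sq_sqrt hargnn
  have hGnn : 0 ≤ G := Real.sqrt_nonneg _
  have hGb : G < b := by nlinarith [mul_pos ha (mul_pos (sub_pos.mpr hrR) (by linarith : (0:ℝ) < R + r))]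
  have ht : 0 < (b - G) / a := div_pos (by linarith) ha
  have hsq : sq2 (y - ((b - G) / a) • w) = r ^ 2 := by
    rw [sq2_sub_smul, ← hbb, ← haa, hcR]
    field_simp
    first
      | (linear_combination hG2; done)
      | (linear_combination a * hG2; done)
      | (linear_combination (-1 : ℝ) * hG2; done)
      | (linear_combination (-a) * hG2; done)
      | (linear_combination a ^ 2 * hG2; done)
      | (linear_combination (-(a ^ 2)) * hG2; done)
  have hmain : tbTime r R y w = (b - G) / a := by
    apply tb_eq ht
    · intro τ h0 hτ
      have hτa : τ * a < b - G := (lt_div_iff₀ ha).mp hτ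
      rw [mem_omega_iff hr.le hR, sq2_sub_smul, ← hbb, ← haa, hcR]
      constructor
      · have k1 : 0 < b - τ * a - G := by linarith
        have k2 : 0 < b - τ * a + G := by linarith
        nlinarith [mul_pos k1 k2]
      · have k : 0 < τ * (2 * b - τ * a) := mul_pos h0 (by linarith)
        nlinarith [k]
    · exact Or.inl (nrm_eq_of_sq2 hr.le hsq)
  exact ⟨hmain, by rw [hmain]; exact hsq⟩

/-- exit time backward from the inner circle (goes to the outer circle) -/
lemma tb_bd_in {r R : ℝ} (hr : 0 < r) (hrR : r < R) {y w : ℝ × ℝ}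
    (ha : 0 < sq2 w) (hcr : sq2 y = r ^ 2) (hb : dot2 y w < 0) :
    tbTime r R y w
        = (dot2 y w + Real.sqrt (dot2 y w ^ 2 + sq2 w * (R ^ 2 - r ^ 2))) / sq2 w ∧
      sq2 (y - tbTime r R y w • w) = R ^ 2 := by
  have hR : 0 < R := lt_trans hr hrR
  set a := sq2 w with haa
  set b := dot2 y w with hbb
  set B := Real.sqrt (b ^ 2 + a * (R ^ 2 - r ^ 2)) with hB
  have hargnn : 0 ≤ b ^ 2 + a * (R ^ 2 - r ^ 2) := by
    nlinarith [sq_nonneg b, mul_pos ha (show (0:ℝ) < R ^ 2 - r ^ 2 by nlinarith)]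
  have hB2 : B ^ 2 = b ^ 2 + a * (R ^ 2 - r ^ 2) := Real.sq_sqrt hargnn
  have hBnn : 0 ≤ B := Real.sqrt_nonneg _
  have hBb : -b < B := by nlinarith [mul_pos ha (mul_pos (sub_pos.mpr hrR) (by linarith : (0:ℝ) < R + r))]
  have ht : 0 < (b + B) / a := div_pos (by linarith) ha
  have hsq : sq2 (y - ((b + B) / a) • w) = R ^ 2 := by
    rw [sq2_sub_smul, ← hbb, ← haa, hcr]
    field_simp
    first
      | (linear_combination hB2; done)
      | (linear_combination a * hB2; done)
      | (linear_combination (-1 : ℝ) * hB2; done)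
      | (linear_combination (-a) * hB2; done)
      | (linear_combination a ^ 2 * hB2; done)
      | (linear_combination (-(a ^ 2)) * hB2; done)
  have hmain : tbTime r R y w = (b + B) / a := by
    apply tb_eq ht
    · intro τ h0 hτ
      have hτa : τ * a < b + B := (lt_div_iff₀ ha).mp hτ
      rw [mem_omega_iff hr.le hR, sq2_sub_smul, ← hbb, ← haa, hcr]
      constructor
      · nlinarith [mul_pos h0 (mul_pos h0 ha), mul_pos h0 (neg_pos.mpr hb)]
      · have k1 : 0 < b + B - τ * a := by linarith
        have k2 : 0 < τ * a - b + B := by nlinarith [mul_pos h0 ha]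
        nlinarith [mul_pos k1 k2]
    · exact Or.inr (nrm_eq_of_sq2 hR.le hsq)
  exact ⟨hmain, by rw [hmain]; exact hsq⟩

end Stmt4

open Stmt4

set_option maxHeartbeats 1600000

/-- for the specular billiard in the annulus, with
`V_{k+1} = V_k − 2(n(X_{k+1})·V_k)n(X_{k+1})` and `X_{k+2} = X_{k+1} − t_{b,k+1}V_{k+1}`,
all inter-collision times are equal: `t_{b,k+1} = t_* = t_b(x,v) + t_f(x,v)` for all k. -/
theorem stmt_4 (r R : ℝ) (hr : 0 < r) (hrR : r < R)
    (x v : ℝ × ℝ) (hx : x ∈ OmegaAnn r R) (hv : v ≠ 0)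
    (X V : ℕ → ℝ × ℝ)
    (hX0 : X 0 = x + tfTime r R x v • v)
    (hX1 : X 1 = x - tbTime r R x v • v)
    (hV0 : V 0 = v)
    (hVrec : ∀ k, V (k + 1)
        = V k - (2 * dot2 (nvec r R (X (k + 1))) (V k)) • nvec r R (X (k + 1)))
    (hXrec : ∀ k, X (k + 2) = X (k + 1) - tbTime r R (X (k + 1)) (V (k + 1)) • V (k + 1))
    (hbd : ∀ k, nrm (X k) = r ∨ nrm (X k) = R)
    (hng : ∀ k, dot2 (nvec r R (X k)) (V k) ≠ 0) :
    ∀ k, tbTime r R (X (k + 1)) (V (k + 1)) = tbTime r R x v + tfTime r R x v := by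
  have hR : 0 < R := lt_trans hr hrR
  have ha : 0 < sq2 v := sq2_pos hv
  have hane : sq2 v ≠ 0 := ne_of_gt ha
  have hc := (mem_omega_iff hr.le hR).mp hx
  have hnv : sq2 (-v) = sq2 v := sq2_neg v
  have hdnv : dot2 x (-v) = -dot2 x v := dot2_neg_right x v
  have htf_tb : tfTime r R x v = tbTime r R x (-v) := tf_eq_tb_neg r R x v
  rcases lt_trichotomy (sq2 v * r ^ 2) (sq2 v * sq2 x - dot2 x v ^ 2) with hreg | hreg | hreg
  · -- regime 1 : the trajectory always stays away from the inner circle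
    obtain ⟨htb0, hs0⟩ := tb_out hr hrR ha hc.1 hc.2 (Or.inr hreg)
    have hregn : sq2 (-v) * r ^ 2 < sq2 (-v) * sq2 x - dot2 x (-v) ^ 2 := by
      rw [hnv, hdnv, neg_sq]; exact hreg
    obtain ⟨htf0, _⟩ := tb_out hr hrR (by rw [hnv]; exact ha) hc.1 hc.2 (Or.inr hregn)
    rw [hnv, hdnv, neg_sq] at htf0
    set B := Real.sqrt (dot2 x v ^ 2 + sq2 v * (R ^ 2 - sq2 x)) with hBdef
    have hB2 : B ^ 2 = dot2 x v ^ 2 + sq2 v * (R ^ 2 - sq2 x) := by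
      rw [hBdef]
      exact Real.sq_sqrt (by nlinarith [sq_nonneg (dot2 x v), mul_pos ha (sub_pos.mpr hc.2)])
    have hBpos : 0 < B := by
      have h1 : 0 ≤ B := hBdef ▸ Real.sqrt_nonneg _
      rcases h1.lt_or_eq with h | h
      · exact h
      · exfalso
        have h2 := hB2
        rw [← h] at h2
        norm_num at h2
        nlinarith [sq_nonneg (dot2 x v), mul_pos ha (sub_pos.mpr hc.2)]
    have htf : tfTime r R x v = (-dot2 x v + B) / sq2 v := by rw [htf_tb, htf0]
    have hs1 : sq2 (X 1) = R ^ 2 := by rw [hX1]; exact hs0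
    have h1ne : sq2 (X 1) ≠ 0 := by rw [hs1]; positivity
    have hd1 : dot2 (X 1) v = -B := by
      rw [hX1, dot2_sub_smul, htb0, div_mul_cancel₀ _ hane]; ring
    have hV1 : V 1 = rfl2 (X 1) v := by
      have h01 : V 1 = V 0 - (2 * dot2 (nvec r R (X 1)) (V 0)) • nvec r R (X 1) := hVrec 0
      rw [h01, hV0]; exact nvec_refl (nrm_ne_zero hR hs1)
    have hbase : sq2 (V 1) = sq2 v ∧ sq2 (X 1) = R ^ 2 ∧ dot2 (X 1) (V 1) = B :=
      ⟨by rw [hV1, sq2_rfl2 h1ne], hs1, by rw [hV1, dot2_rfl2 h1ne, hd1, neg_neg]⟩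
    have hstep : ∀ k,
        (sq2 (V (k + 1)) = sq2 v ∧ sq2 (X (k + 1)) = R ^ 2 ∧
          dot2 (X (k + 1)) (V (k + 1)) = B) →
        ((sq2 (V (k + 2)) = sq2 v ∧ sq2 (X (k + 2)) = R ^ 2 ∧
          dot2 (X (k + 2)) (V (k + 2)) = B) ∧
          tbTime r R (X (k + 1)) (V (k + 1)) = 2 * B / sq2 v) := by
      rintro k ⟨hw, hyR, hd⟩
      have haw : 0 < sq2 (V (k + 1)) := by rw [hw]; exact ha
      have hbw : 0 < dot2 (X (k + 1)) (V (k + 1)) := by rw [hd]; exact hBpos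
      have hregw : sq2 (V (k + 1)) * r ^ 2
          < sq2 (V (k + 1)) * sq2 (X (k + 1)) - dot2 (X (k + 1)) (V (k + 1)) ^ 2 := by
        rw [hw, hyR, hd]
        have hBQ : sq2 v * R ^ 2 - B ^ 2 = sq2 v * sq2 x - dot2 x v ^ 2 := by
          linear_combination -hB2
        linarith [hreg]
      obtain ⟨ht0, hsq0⟩ := tb_bd_out1 hr hrR haw hyR hbw hregw
      have ht : tbTime r R (X (k + 1)) (V (k + 1)) = 2 * B / sq2 v := by rw [ht0, hd, hw]
      have hs2 : sq2 (X (k + 2)) = R ^ 2 := by rw [hXrec k]; exact hsq0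
      have h2ne : sq2 (X (k + 2)) ≠ 0 := by rw [hs2]; positivity
      have hd2 : dot2 (X (k + 2)) (V (k + 1)) = -B := by
        rw [hXrec k, dot2_sub_smul, ht, hd, hw, div_mul_cancel₀ _ hane]; ring
      have hV2 : V (k + 2) = rfl2 (X (k + 2)) (V (k + 1)) := by
        have h12 : V (k + 2) = V (k + 1)
            - (2 * dot2 (nvec r R (X (k + 2))) (V (k + 1))) • nvec r R (X (k + 2)) :=
          hVrec (k + 1)
        rw [h12]; exact nvec_refl (nrm_ne_zero hR hs2)
      exact ⟨⟨by rw [hV2, sq2_rfl2 h2ne, hw], hs2,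
        by rw [hV2, dot2_rfl2 h2ne, hd2, neg_neg]⟩, ht⟩
    have hP : ∀ k, sq2 (V (k + 1)) = sq2 v ∧ sq2 (X (k + 1)) = R ^ 2 ∧
        dot2 (X (k + 1)) (V (k + 1)) = B := by
      intro k
      induction k with
      | zero => exact hbase
      | succ n ih => exact (hstep n ih).1
    intro k
    rw [(hstep k (hP k)).2, htb0, htf]
    ring
  · -- tangency regime : contradicts non-grazing
    exfalso
    rcases lt_trichotomy (dot2 x v) 0 with hb | hb | hb
    · have hobn : 0 < dot2 x (-v) := by rw [hdnv]; linarith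
      have hregn : sq2 (-v) * sq2 x - dot2 x (-v) ^ 2 ≤ sq2 (-v) * r ^ 2 := by
        rw [hnv, hdnv, neg_sq]; linarith
      obtain ⟨htf0, _⟩ := tb_in hr hrR (by rw [hnv]; exact ha) hc.1 hc.2 hobn hregn
      rw [hnv, hdnv, neg_sq] at htf0
      rw [show dot2 x v ^ 2 - sq2 v * (sq2 x - r ^ 2) = 0 from by linear_combination hreg,
        Real.sqrt_zero] at htf0
      have htf : tfTime r R x v = -dot2 x v / sq2 v := by rw [htf_tb, htf0]; ring
      have hd0 : dot2 (X 0) v = 0 := by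
        rw [hX0, dot2_add_smul, htf, div_mul_cancel₀ _ hane]; ring
      exact hng 0 (by rw [hV0]; exact dot2_nvec_zero hd0)
    · rw [hb] at hreg
      nlinarith [mul_pos ha (sub_pos.mpr hc.1)]
    · have hregb : sq2 v * sq2 x - dot2 x v ^ 2 ≤ sq2 v * r ^ 2 := le_of_eq hreg.symm
      obtain ⟨htb0, hs0⟩ := tb_in hr hrR ha hc.1 hc.2 hb hregb
      rw [show dot2 x v ^ 2 - sq2 v * (sq2 x - r ^ 2) = 0 from by linear_combination hreg,
        Real.sqrt_zero] at htb0
      have hs1 : sq2 (X 1) = r ^ 2 := by rw [hX1]; exact hs0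
      have h1ne : sq2 (X 1) ≠ 0 := by rw [hs1]; positivity
      have hd1 : dot2 (X 1) v = 0 := by
        rw [hX1, dot2_sub_smul, htb0, div_mul_cancel₀ _ hane]; ring
      have hV1 : V 1 = rfl2 (X 1) v := by
        have h01 : V 1 = V 0 - (2 * dot2 (nvec r R (X 1)) (V 0)) • nvec r R (X 1) := hVrec 0
        rw [h01, hV0]; exact nvec_refl (nrm_ne_zero hr hs1)
      have hdd : dot2 (X 1) (V 1) = 0 := by rw [hV1, dot2_rfl2 h1ne, hd1, neg_zero]
      exact hng 1 (dot2_nvec_zero hdd)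
  · -- regime 2 : trajectory alternates between the two circles
    have hbne : dot2 x v ≠ 0 := by
      intro h0; rw [h0] at hreg
      nlinarith [mul_pos ha (sub_pos.mpr hc.1)]
    set B := Real.sqrt (dot2 x v ^ 2 + sq2 v * (R ^ 2 - sq2 x)) with hBdef
    set G := Real.sqrt (dot2 x v ^ 2 - sq2 v * (sq2 x - r ^ 2)) with hGdef
    have hB2 : B ^ 2 = dot2 x v ^ 2 + sq2 v * (R ^ 2 - sq2 x) := by
      rw [hBdef]
      exact Real.sq_sqrt (by nlinarith [sq_nonneg (dot2 x v), mul_pos ha (sub_pos.mpr hc.2)])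
    have hG2 : G ^ 2 = dot2 x v ^ 2 - sq2 v * (sq2 x - r ^ 2) := by
      rw [hGdef]
      exact Real.sq_sqrt (by nlinarith)
    have hBpos : 0 < B := by
      have h1 : 0 ≤ B := hBdef ▸ Real.sqrt_nonneg _
      rcases h1.lt_or_eq with h | h
      · exact h
      · exfalso
        have h2 := hB2
        rw [← h] at h2
        norm_num at h2
        nlinarith [sq_nonneg (dot2 x v), mul_pos ha (sub_pos.mpr hc.2)]
    have hGsq : G ^ 2 = sq2 v * r ^ 2 - (sq2 v * sq2 x - dot2 x v ^ 2) := by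
      linear_combination hG2
    have hGpos : 0 < G := by
      have h1 : 0 ≤ G := hGdef ▸ Real.sqrt_nonneg _
      rcases h1.lt_or_eq with h | h
      · exact h
      · exfalso
        rw [← h] at hGsq
        norm_num at hGsq
        linarith [hreg]
    have hbase : (tbTime r R x v + tfTime r R x v = (B - G) / sq2 v) ∧
        (sq2 (V 1) = sq2 v ∧
          ((sq2 (X 1) = R ^ 2 ∧ dot2 (X 1) (V 1) = B) ∨
           (sq2 (X 1) = r ^ 2 ∧ dot2 (X 1) (V 1) = -G))) := by
      rcases hbne.lt_or_gt with hb | hb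
      · obtain ⟨htb0, hs0⟩ := tb_out hr hrR ha hc.1 hc.2 (Or.inl hb.le)
        rw [← hBdef] at htb0
        have hobn : 0 < dot2 x (-v) := by rw [hdnv]; linarith
        have hregn : sq2 (-v) * sq2 x - dot2 x (-v) ^ 2 ≤ sq2 (-v) * r ^ 2 := by
          rw [hnv, hdnv, neg_sq]; linarith
        obtain ⟨htf0, _⟩ := tb_in hr hrR (by rw [hnv]; exact ha) hc.1 hc.2 hobn hregn
        rw [hnv, hdnv, neg_sq, ← hGdef] at htf0
        have htf : tfTime r R x v = (-dot2 x v - G) / sq2 v := by rw [htf_tb, htf0]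
        have hs1 : sq2 (X 1) = R ^ 2 := by rw [hX1]; exact hs0
        have h1ne : sq2 (X 1) ≠ 0 := by rw [hs1]; positivity
        have hd1 : dot2 (X 1) v = -B := by
          rw [hX1, dot2_sub_smul, htb0, div_mul_cancel₀ _ hane]; ring
        have hV1 : V 1 = rfl2 (X 1) v := by
          have h01 : V 1 = V 0 - (2 * dot2 (nvec r R (X 1)) (V 0)) • nvec r R (X 1) := hVrec 0
          rw [h01, hV0]; exact nvec_refl (nrm_ne_zero hR hs1)
        refine ⟨by rw [htb0, htf]; ring, by rw [hV1, sq2_rfl2 h1ne],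
          Or.inl ⟨hs1, by rw [hV1, dot2_rfl2 h1ne, hd1, neg_neg]⟩⟩
      · obtain ⟨htb0, hs0⟩ := tb_in hr hrR ha hc.1 hc.2 hb hreg.le
        rw [← hGdef] at htb0
        obtain ⟨htf0, _⟩ := tb_out hr hrR (by rw [hnv]; exact ha) hc.1 hc.2
          (Or.inl (by rw [hdnv]; linarith))
        rw [hnv, hdnv, neg_sq, ← hBdef] at htf0
        have htf : tfTime r R x v = (-dot2 x v + B) / sq2 v := by rw [htf_tb, htf0]
        have hs1 : sq2 (X 1) = r ^ 2 := by rw [hX1]; exact hs0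
        have h1ne : sq2 (X 1) ≠ 0 := by rw [hs1]; positivity
        have hd1 : dot2 (X 1) v = G := by
          rw [hX1, dot2_sub_smul, htb0, div_mul_cancel₀ _ hane]; ring
        have hV1 : V 1 = rfl2 (X 1) v := by
          have h01 : V 1 = V 0 - (2 * dot2 (nvec r R (X 1)) (V 0)) • nvec r R (X 1) := hVrec 0
          rw [h01, hV0]; exact nvec_refl (nrm_ne_zero hr hs1)
        refine ⟨by rw [htb0, htf]; ring, by rw [hV1, sq2_rfl2 h1ne],
          Or.inr ⟨hs1, by rw [hV1, dot2_rfl2 h1ne, hd1]⟩⟩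
    obtain ⟨hT, hbase⟩ := hbase
    have hstep : ∀ k,
        (sq2 (V (k + 1)) = sq2 v ∧
          ((sq2 (X (k + 1)) = R ^ 2 ∧ dot2 (X (k + 1)) (V (k + 1)) = B) ∨
           (sq2 (X (k + 1)) = r ^ 2 ∧ dot2 (X (k + 1)) (V (k + 1)) = -G))) →
        ((sq2 (V (k + 2)) = sq2 v ∧
          ((sq2 (X (k + 2)) = R ^ 2 ∧ dot2 (X (k + 2)) (V (k + 2)) = B) ∨
           (sq2 (X (k + 2)) = r ^ 2 ∧ dot2 (X (k + 2)) (V (k + 2)) = -G))) ∧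
          tbTime r R (X (k + 1)) (V (k + 1)) = (B - G) / sq2 v) := by
      rintro k ⟨hw, hcase⟩
      have haw : 0 < sq2 (V (k + 1)) := by rw [hw]; exact ha
      rcases hcase with ⟨hyR, hd⟩ | ⟨hyr, hd⟩
      · have hbw : 0 < dot2 (X (k + 1)) (V (k + 1)) := by rw [hd]; exact hBpos
        have hregw : sq2 (V (k + 1)) * sq2 (X (k + 1)) - dot2 (X (k + 1)) (V (k + 1)) ^ 2
            ≤ sq2 (V (k + 1)) * r ^ 2 := by
          rw [hw, hyR, hd]
          have hBQ : sq2 v * R ^ 2 - B ^ 2 = sq2 v * sq2 x - dot2 x v ^ 2 := by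
            linear_combination -hB2
          linarith [hreg]
        obtain ⟨ht0, hsq0⟩ := tb_bd_out2 hr hrR haw hyR hbw hregw
        rw [hd, hw,
          show B ^ 2 - sq2 v * (R ^ 2 - r ^ 2) = dot2 x v ^ 2 - sq2 v * (sq2 x - r ^ 2) from
            by linear_combination hB2, ← hGdef] at ht0
        have hs2 : sq2 (X (k + 2)) = r ^ 2 := by rw [hXrec k]; exact hsq0
        have h2ne : sq2 (X (k + 2)) ≠ 0 := by rw [hs2]; positivity
        have hd2 : dot2 (X (k + 2)) (V (k + 1)) = G := by
          rw [hXrec k, dot2_sub_smul, ht0, hd, hw, div_mul_cancel₀ _ hane]; ring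
        have hV2 : V (k + 2) = rfl2 (X (k + 2)) (V (k + 1)) := by
          have h12 : V (k + 2) = V (k + 1)
              - (2 * dot2 (nvec r R (X (k + 2))) (V (k + 1))) • nvec r R (X (k + 2)) :=
            hVrec (k + 1)
          rw [h12]; exact nvec_refl (nrm_ne_zero hr hs2)
        exact ⟨⟨by rw [hV2, sq2_rfl2 h2ne, hw],
          Or.inr ⟨hs2, by rw [hV2, dot2_rfl2 h2ne, hd2]⟩⟩, ht0⟩
      · have hbw : dot2 (X (k + 1)) (V (k + 1)) < 0 := by rw [hd]; linarith
        obtain ⟨ht0, hsq0⟩ := tb_bd_in hr hrR haw hyr hbw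
        rw [hd, hw,
          show (-G) ^ 2 + sq2 v * (R ^ 2 - r ^ 2) = dot2 x v ^ 2 + sq2 v * (R ^ 2 - sq2 x) from
            by linear_combination hG2, ← hBdef] at ht0
        have ht : tbTime r R (X (k + 1)) (V (k + 1)) = (B - G) / sq2 v := by
          rw [ht0]; ring
        have hs2 : sq2 (X (k + 2)) = R ^ 2 := by rw [hXrec k]; exact hsq0
        have h2ne : sq2 (X (k + 2)) ≠ 0 := by rw [hs2]; positivity
        have hd2 : dot2 (X (k + 2)) (V (k + 1)) = -B := by
          rw [hXrec k, dot2_sub_smul, ht, hd, hw, div_mul_cancel₀ _ hane]; ring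
        have hV2 : V (k + 2) = rfl2 (X (k + 2)) (V (k + 1)) := by
          have h12 : V (k + 2) = V (k + 1)
              - (2 * dot2 (nvec r R (X (k + 2))) (V (k + 1))) • nvec r R (X (k + 2)) :=
            hVrec (k + 1)
          rw [h12]; exact nvec_refl (nrm_ne_zero hR hs2)
        exact ⟨⟨by rw [hV2, sq2_rfl2 h2ne, hw],
          Or.inl ⟨hs2, by rw [hV2, dot2_rfl2 h2ne, hd2, neg_neg]⟩⟩, ht⟩
    have hP : ∀ k, sq2 (V (k + 1)) = sq2 v ∧
        ((sq2 (X (k + 1)) = R ^ 2 ∧ dot2 (X (k + 1)) (V (k + 1)) = B) ∨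
         (sq2 (X (k + 1)) = r ^ 2 ∧ dot2 (X (k + 1)) (V (k + 1)) = -G)) := by
      intro k
      induction k with
      | zero => exact hbase
      | succ n ih => exact (hstep n ih).1
    intro k
    rw [(hstep k (hP k)).2, hT]
end

section
/- With the setup of specular billiards in the annulus (concentric circles of radii r < R), the collision pattern is 2-periodic in radius and the normal component of velocity is invariant with period 2: for all k ≥ 0, |X_{2k}|_p = |X₀|_p, |X_{2k+1}|_p = |X₁|_p, n(X_{2k})·V_{2k} = n(X₀)·V₀, and n(X_{2k+1})·V_{2k+1} = n(X₁)·V₁. -/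
lemma nrm_sq (y : ℝ × ℝ) : nrm y ^ 2 = y.1 ^ 2 + y.2 ^ 2 := by
  rw [nrm, Real.sq_sqrt]; positivity

lemma nrm_eq_sqrt_dot (y : ℝ × ℝ) : nrm y = Real.sqrt (dot2 y y) := by
  unfold nrm dot2; congr 1; ring

lemma dot2_sub_smul (y w n : ℝ × ℝ) (c : ℝ) :
    dot2 y (w - c • n) = dot2 y w - c * dot2 y n := by
  simp [dot2, Prod.fst_sub, Prod.snd_sub, Prod.smul_fst, Prod.smul_snd, smul_eq_mul]; ring

lemma dot2_nvec (r R : ℝ) (y w : ℝ × ℝ) :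
    dot2 (nvec r R y) w = (if nrm y = R then (1:ℝ) else -1) * ((nrm y)⁻¹ * dot2 y w) := by
  unfold nvec dot2
  split <;>
    simp only [Prod.smul_fst, Prod.smul_snd, Prod.fst_neg, Prod.snd_neg, smul_eq_mul] <;> ring

lemma reflect_flip (r R : ℝ) (y w : ℝ × ℝ) (hN : nrm y ≠ 0) :
    dot2 y (w - (2 * dot2 (nvec r R y) w) • nvec r R y) = - dot2 y w := by
  have hsq := nrm_sq y
  have hyy : dot2 y y = nrm y ^ 2 := by unfold dot2; rw [hsq]; ring
  rw [dot2_sub_smul]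
  have h1 : dot2 y (nvec r R y) = dot2 (nvec r R y) y := by unfold dot2; ring
  rw [h1, dot2_nvec, dot2_nvec, hyy]
  split <;> field_simp <;> ring

lemma reflect_speed (r R : ℝ) (y w : ℝ × ℝ) (hN : nrm y ≠ 0) :
    dot2 (w - (2 * dot2 (nvec r R y) w) • nvec r R y)
         (w - (2 * dot2 (nvec r R y) w) • nvec r R y) = dot2 w w := by
  have hsq := nrm_sq y
  set c := 2 * dot2 (nvec r R y) w with hc
  have expand : dot2 (w - c • nvec r R y) (w - c • nvec r R y)
      = dot2 w w - 2 * c * dot2 (nvec r R y) w + c ^ 2 * dot2 (nvec r R y) (nvec r R y) := by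
    simp [dot2, Prod.fst_sub, Prod.snd_sub, Prod.smul_fst, Prod.smul_snd, smul_eq_mul]; ring
  have hnn : dot2 (nvec r R y) (nvec r R y) = 1 := by
    unfold nvec dot2
    split <;>
      simp only [Prod.smul_fst, Prod.smul_snd, Prod.fst_neg, Prod.snd_neg, smul_eq_mul] <;>
      · field_simp
        nlinarith [hsq]
  rw [expand, hnn]
  ring

/-- for the specular billiard in the annulus (constant inter-collision time
`t_* = t_b + t_f`), the collision pattern is 2-periodic in radius and the normal component
of velocity is invariant with period 2. -/
theorem stmt_5 (r R : ℝ) (hr : 0 < r) (hrR : r < R)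
    (x v : ℝ × ℝ) (hx : x ∈ OmegaAnn r R) (hv : v ≠ 0)
    (X V : ℕ → ℝ × ℝ)
    (hX0 : X 0 = x + tfTime r R x v • v)
    (hX1 : X 1 = x - tbTime r R x v • v)
    (hV0 : V 0 = v)
    (hVrec : ∀ k, V (k + 1)
        = V k - (2 * dot2 (nvec r R (X (k + 1))) (V k)) • nvec r R (X (k + 1)))
    (hXrec : ∀ k, X (k + 2)
        = X (k + 1) - (tbTime r R x v + tfTime r R x v) • V (k + 1))
    (hbd : ∀ k, nrm (X k) = r ∨ nrm (X k) = R)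
    (hng : ∀ k, dot2 (nvec r R (X k)) (V k) ≠ 0) :
    ∀ k : ℕ,
      nrm (X (2 * k)) = nrm (X 0) ∧
      nrm (X (2 * k + 1)) = nrm (X 1) ∧
      dot2 (nvec r R (X (2 * k))) (V (2 * k)) = dot2 (nvec r R (X 0)) (V 0) ∧
      dot2 (nvec r R (X (2 * k + 1))) (V (2 * k + 1)) = dot2 (nvec r R (X 1)) (V 1) := by
  set t : ℝ := tbTime r R x v + tfTime r R x v with ht
  -- norms of collision points are nonzero
  have hNz : ∀ k, nrm (X k) ≠ 0 := by
    intro k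
    rcases hbd k with h | h <;> rw [h]
    · exact ne_of_gt hr
    · exact ne_of_gt (lt_trans hr hrR)
  -- constant speed
  have hspeed : ∀ k, dot2 (V k) (V k) = dot2 v v := by
    intro k
    induction k with
    | zero => rw [hV0]
    | succ n ih =>
        rw [hVrec n, reflect_speed r R _ _ (hNz (n + 1)), ih]
  -- uniform step relation
  have hstep : ∀ k, X (k + 1) = X k - t • V k := by
    intro k
    cases k with
    | zero =>
        rw [hX1, hX0, hV0, ht, add_smul]
        abel
    | succ n => exact hXrec n
  -- evolution of dot2 (X k) (V k)
  have hb : ∀ k, dot2 (X (k + 1)) (V (k + 1)) = t * dot2 v v - dot2 (X k) (V k) := by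
    intro k
    rw [hVrec k, reflect_flip r R _ _ (hNz (k + 1)), hstep k]
    have : dot2 (X k - t • V k) (V k) = dot2 (X k) (V k) - t * dot2 (V k) (V k) := by
      simp [dot2, Prod.fst_sub, Prod.snd_sub, Prod.smul_fst, Prod.smul_snd, smul_eq_mul]; ring
    rw [this, hspeed k]
    ring
  -- 2-periodicity of dot2 (X k) (V k)
  have hb2 : ∀ k, dot2 (X (k + 2)) (V (k + 2)) = dot2 (X k) (V k) := by
    intro k
    rw [show k + 2 = (k + 1) + 1 from rfl, hb (k + 1), hb k]
    ring
  -- evolution of |X k|²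
  have ha : ∀ k, dot2 (X (k + 1)) (X (k + 1))
      = dot2 (X k) (X k) - 2 * t * dot2 (X k) (V k) + t ^ 2 * dot2 v v := by
    intro k
    rw [hstep k]
    have : dot2 (X k - t • V k) (X k - t • V k)
        = dot2 (X k) (X k) - 2 * t * dot2 (X k) (V k) + t ^ 2 * dot2 (V k) (V k) := by
      simp [dot2, Prod.fst_sub, Prod.snd_sub, Prod.smul_fst, Prod.smul_snd, smul_eq_mul]; ring
    rw [this, hspeed k]
  -- 2-periodicity of |X k|²
  have ha2 : ∀ k, dot2 (X (k + 2)) (X (k + 2)) = dot2 (X k) (X k) := by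
    intro k
    have h1 := ha (k + 1)
    have h2 := ha k
    have h3 := hb k
    rw [show k + 1 + 1 = k + 2 from rfl] at h1
    rw [h1, h2, h3]
    ring
  -- 2-periodicity of the norm
  have hn2 : ∀ k, nrm (X (k + 2)) = nrm (X k) := by
    intro k
    rw [nrm_eq_sqrt_dot, nrm_eq_sqrt_dot, ha2 k]
  -- 2-periodicity of the normal component
  have hd2 : ∀ k, dot2 (nvec r R (X (k + 2))) (V (k + 2)) = dot2 (nvec r R (X k)) (V k) := by
    intro k
    rw [dot2_nvec, dot2_nvec, hn2 k, hb2 k]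
  intro k
  induction k with
  | zero => simp
  | succ n ih =>
      obtain ⟨i1, i2, i3, i4⟩ := ih
      refine ⟨?_, ?_, ?_, ?_⟩
      · rw [show 2 * (n + 1) = 2 * n + 2 by ring, hn2 (2 * n), i1]
      · rw [show 2 * (n + 1) + 1 = 2 * n + 1 + 2 by ring, hn2 (2 * n + 1), i2]
      · rw [show 2 * (n + 1) = 2 * n + 2 by ring, hd2 (2 * n), i3]
      · rw [show 2 * (n + 1) + 1 = 2 * n + 1 + 2 by ring, hd2 (2 * n + 1), i4]
end

section
/- Singularity-averaging integral: for constants 0 < r < R, |x|_p ≥ r, and a linear path x(τ) in the plane with x(τ)₂ = (1−τ)x̃₂ + τx₂ (x₂ ≠ x̃₂), define sin b(τ) = x(τ)₂/r ∈ [sin b(τ_*), 1] on the interval between τ_* and τ₊ where x(τ₊)₂ = r. Then |∫_{τ_*}^{τ₊} x(τ)₂ / √(r² − x(τ)₂²) dτ| = (r/|x₂ − x̃₂|) cos b(τ_*) ≤ C |τ₊ − τ_*| / cos b(τ_*). -/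
/-!
The path is affine with slope `x₂ − x̃₂`, so the substitution `t = X2 τ` turns the integral into
`(x₂ − x̃₂)⁻¹ ∫_{X2 τ_*}^r t / √(r² − t²) dt`, and `−√(r² − t²)` is an antiderivative. Its
derivative is nonnegative on `[X2 τ_*, r)`, which makes it integrable across the square-root
singularity at `t = r`. With `a = X2 τ_*`, the bound follows from `|τ₊ − τ_*| |x₂ − x̃₂| = r − a`
and `(r² − a²) / (r − a) = r + a ≤ 2r`.
-/

open Real MeasureTheory Set

theorem integral_div_sqrt_sq_sub_sq {a r : ℝ} (ha : 0 ≤ a) (har : a ≤ r) :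
    ∫ t in a..r, t / √(r ^ 2 - t ^ 2) = √(r ^ 2 - a ^ 2) := by
  have hcont : ContinuousOn (fun t => -√(r ^ 2 - t ^ 2)) (Icc a r) := by fun_prop
  have hderiv :
      ∀ t ∈ Ioo a r, HasDerivAt (fun t => -√(r ^ 2 - t ^ 2)) (t / √(r ^ 2 - t ^ 2)) t := by
    rintro t ⟨hat, htr⟩
    have hpos : 0 < r ^ 2 - t ^ 2 := by nlinarith
    refine (((hasDerivAt_pow 2 t).const_sub (r ^ 2)).sqrt hpos.ne').neg.congr_deriv ?_
    field_simp
    norm_num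
  have hnonneg : ∀ t ∈ Ioo a r, 0 ≤ t / √(r ^ 2 - t ^ 2) := fun t ht =>
    div_nonneg (ha.trans ht.1.le) (sqrt_nonneg _)
  have hint : IntervalIntegrable (fun t => t / √(r ^ 2 - t ^ 2)) volume a r :=
    (intervalIntegrable_iff_integrableOn_Ioc_of_le har).2
      (intervalIntegral.integrableOn_deriv_of_nonneg hcont hderiv hnonneg)
  rw [intervalIntegral.integral_eq_sub_of_hasDerivAt_of_le har hcont hderiv hint]
  simp

theorem sqrt_sq_sub_sq_div_sub_le {a r : ℝ} (ha : 0 ≤ a) (har : a < r) :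
    √(r ^ 2 - a ^ 2) / (r - a) ≤ 2 * r / √(r ^ 2 - a ^ 2) := by
  have hs : 0 < √(r ^ 2 - a ^ 2) := sqrt_pos.2 (by nlinarith)
  rw [div_le_div_iff₀ (by linarith) hs, ← sq, sq_sqrt (by nlinarith)]
  nlinarith

theorem stmt_16_general (r : ℝ) (hr : 0 < r)
    (x2 xt2 τs τp : ℝ) (hne : x2 ≠ xt2)
    (X2 : ℝ → ℝ) (hX2 : ∀ τ, X2 τ = (1 - τ) * xt2 + τ * x2)
    (hhit : X2 τp = r) (h0 : 0 ≤ X2 τs) (hlt : X2 τs < r) :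
    ∃ C > 0,
      |∫ τ in τs..τp, X2 τ / Real.sqrt (r ^ 2 - X2 τ ^ 2)| =
        (r / |x2 - xt2|) * (Real.sqrt (r ^ 2 - X2 τs ^ 2) / r) ∧
      (r / |x2 - xt2|) * (Real.sqrt (r ^ 2 - X2 τs ^ 2) / r) ≤
        C * |τp - τs| / (Real.sqrt (r ^ 2 - X2 τs ^ 2) / r) := by
  set d := x2 - xt2
  have hd : d ≠ 0 := sub_ne_zero.2 hne
  have hX : ∀ τ, xt2 + d * τ = X2 τ := fun τ => by rw [hX2]; ring
  have hval : ∫ τ in τs..τp, X2 τ / √(r ^ 2 - X2 τ ^ 2) = d⁻¹ * √(r ^ 2 - X2 τs ^ 2) := by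
    have := intervalIntegral.integral_comp_add_mul (fun t => t / √(r ^ 2 - t ^ 2)) hd xt2
      (a := τs) (b := τp)
    simp only [hX, hhit, integral_div_sqrt_sq_sub_sq h0 hlt.le] at this
    exact this
  have hlen : |τp - τs| * |d| = r - X2 τs := by
    have : (τp - τs) * d = r - X2 τs := by rw [← hhit, ← hX, ← hX]; ring
    rw [← abs_mul, this, abs_of_pos (by linarith)]
  have hs : 0 < √(r ^ 2 - X2 τs ^ 2) := sqrt_pos.2 (by nlinarith)
  refine ⟨2, two_pos, ?_, ?_⟩
  · rw [hval, abs_mul, abs_inv, abs_of_pos hs]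
    field_simp
  · calc r / |d| * (√(r ^ 2 - X2 τs ^ 2) / r)
        = |τp - τs| * (√(r ^ 2 - X2 τs ^ 2) / (r - X2 τs)) := by
          have hτ : |τp - τs| ≠ 0 := fun h => by rw [h, zero_mul] at hlen; linarith
          rw [← hlen]; field_simp
      _ ≤ |τp - τs| * (2 * r / √(r ^ 2 - X2 τs ^ 2)) :=
          mul_le_mul_of_nonneg_left (sqrt_sq_sub_sq_div_sub_le h0 hlt) (abs_nonneg _)
      _ = 2 * |τp - τs| / (√(r ^ 2 - X2 τs ^ 2) / r) := by
          field_simp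

/-- singularity-averaging integral. For `0 < r < R`, a linear path
`X2 τ = (1−τ)x̃₂ + τx₂` (with `x₂ ≠ x̃₂`), `X2 τ₊ = r` and `0 ≤ X2 τ_* < r`, one has
`|∫_{τ_*}^{τ₊} X2 τ / √(r² − X2 τ²) dτ| = (r/|x₂ − x̃₂|) cos b(τ_*)
 ≤ C |τ₊ − τ_*| / cos b(τ_*)`, where `cos b(τ_*) = √(r² − X2 τ_*²)/r`. -/
theorem stmt_16 (r R : ℝ) (hr : 0 < r) (hrR : r < R)
    (x2 xt2 τs τp : ℝ) (hne : x2 ≠ xt2)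
    (X2 : ℝ → ℝ) (hX2 : ∀ τ, X2 τ = (1 - τ) * xt2 + τ * x2)
    (hhit : X2 τp = r) (h0 : 0 ≤ X2 τs) (hlt : X2 τs < r) :
    ∃ C > 0,
      |∫ τ in τs..τp, X2 τ / Real.sqrt (r ^ 2 - X2 τ ^ 2)| =
        (r / |x2 - xt2|) * (Real.sqrt (r ^ 2 - X2 τs ^ 2) / r) ∧
      (r / |x2 - xt2|) * (Real.sqrt (r ^ 2 - X2 τs ^ 2) / r) ≤
        C * |τp - τs| / (Real.sqrt (r ^ 2 - X2 τs ^ 2) / r) :=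
  stmt_16_general r hr x2 xt2 τs τp hne X2 hX2 hhit h0 hlt
end
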